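/- arXiv:2209.05238 — 2 statements merged into one kernel-verified Lean document; each statement's English description precedes it below -/
import Mathlib

section
/- Let (H, ≼) be a premon in which every ≼-irreducible has finite ≼-height. Then H is ≼-factorable if and only if (H, ≼) is locally artinian. -/
variable {H : Type*} [Monoid H]

/-- `u` is a `≼`-unit. -/
def PreUnit (r : H → H → Prop) (u : H) : Prop := r u 1 ∧ r 1 u

/-- strict form of the preorder: `a ≺ b`. -/
def PreLt (r : H → H → Prop) (a b : H) : Prop := r a b ∧ ¬ r b a

/-- the `≼`-height of `x`: the sup in `ℕ∞` of the lengths `n ≥ 1` of chains of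
`≼`-non-units `x = x₁ ≻ x₂ ≻ ⋯ ≻ xₙ`, with `sSup ∅ = 0`. -/
noncomputable def PreHeight (r : H → H → Prop) (x : H) : ℕ∞ :=
  sSup {e : ℕ∞ | ∃ n : ℕ, e = n ∧ 1 ≤ n ∧ ∃ f : ℕ → H, f 0 = x ∧
    (∀ i < n, ¬ PreUnit r (f i)) ∧ ∀ i, i + 1 < n → PreLt r (f (i + 1)) (f i)}

/-- `x` is `≼`-artinian. -/
def PreArtinian (r : H → H → Prop) (x : H) : Prop :=
  ¬ ∃ f : ℕ → H, f 0 = x ∧ ∀ i, PreLt r (f (i + 1)) (f i)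

/-- `a` is a `≼`-quark. -/
def PreQuark (r : H → H → Prop) (a : H) : Prop :=
  ¬ PreUnit r a ∧ ¬ ∃ b, ¬ PreUnit r b ∧ PreLt r b a

/-- `a` is a `≼`-irreducible (of degree 2). -/
def PreIrred (r : H → H → Prop) (a : H) : Prop :=
  ¬ PreUnit r a ∧ ∀ y z : H, ¬ PreUnit r y → ¬ PreUnit r z →
    PreLt r y a → PreLt r z a → a ≠ y * z

/-- `a` is a `≼`-irreducible of degree `s`. -/
def PreIrredDeg (r : H → H → Prop) (s : ℕ) (a : H) : Prop :=
  ¬ PreUnit r a ∧ ∀ l : List H, 2 ≤ l.length → l.length ≤ s →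
    (∀ x ∈ l, ¬ PreUnit r x ∧ PreLt r x a) → a ≠ l.prod

/-- `(H, ≼)` is locally artinian. -/
def LocallyArtinian (r : H → H → Prop) : Prop :=
  ∀ x : H, ¬ PreUnit r x → ∃ l : List H,
    (∀ a ∈ l, ¬ PreUnit r a ∧ PreArtinian r a) ∧ x = l.prod

/-- `H` is `≼`-factorable. -/
def PreFactorable (r : H → H → Prop) : Prop :=
  ∀ x : H, ¬ PreUnit r x → ∃ l : List H, (∀ a ∈ l, PreIrred r a) ∧ x = l.prod

section Aux

variable (r : H → H → Prop)

lemma preLt_of_preLt_of_le (ht : Transitive r) {a b c : H} (h : PreLt r a b) (h2 : r b c) :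
    PreLt r a c :=
  ⟨ht h.1 h2, fun hca => h.2 (ht h2 hca)⟩

lemma preLt_of_le_of_preLt (ht : Transitive r) {a b c : H} (h : r a b) (h2 : PreLt r b c) :
    PreLt r a c :=
  ⟨ht h h2.1, fun hca => h2.2 (ht hca h)⟩

lemma chain_preLt (ht : Transitive r) {f : ℕ → H} (hf : ∀ i, PreLt r (f (i + 1)) (f i))
    {i j : ℕ} (h : i < j) : PreLt r (f j) (f i) := by
  induction j, h using Nat.le_induction with
  | base => exact hf i
  | succ n hn ih => exact preLt_of_le_of_preLt r ht (hf n).1 ih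

lemma not_preLt_units {u v : H} (ht : Transitive r) (hu : PreUnit r u) (hv : PreUnit r v) :
    ¬ PreLt r u v := fun h => h.2 (ht hv.1 hu.2)

lemma preArtinian_of_preLt (ht : Transitive r) {x y : H} (hx : PreArtinian r x)
    (h : PreLt r y x) : PreArtinian r y := by
  rintro ⟨f, hf0, hf⟩
  refine hx ⟨fun n => Nat.rec x (fun n _ => f n) n, rfl, fun i => ?_⟩
  cases i with
  | zero => simpa [hf0] using h
  | succ n => exact hf n

lemma acc_of_preArtinian {x : H} (hx : PreArtinian r x) : Acc (PreLt r) x := by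
  by_contra hacc
  apply hx
  have key : ∀ z : H, ¬ Acc (PreLt r) z → ∃ y, PreLt r y z ∧ ¬ Acc (PreLt r) y := by
    intro z hz
    by_contra h
    push_neg at h
    exact hz (Acc.intro z h)
  let F : ℕ → {z : H // ¬ Acc (PreLt r) z} := fun n =>
    Nat.rec ⟨x, hacc⟩ (fun _ p => ⟨(key p.1 p.2).choose, (key p.1 p.2).choose_spec.2⟩) n
  exact ⟨fun n => (F n).1, rfl, fun i => (key (F i).1 (F i).2).choose_spec.1⟩

lemma preHeight_top_of_not_preArtinian (ht : Transitive r) {a : H} (hnu : ¬ PreUnit r a)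
    (h : ¬ PreArtinian r a) : PreHeight r a = ⊤ := by
  rw [PreArtinian, not_not] at h
  obtain ⟨f, hf0, hf⟩ := h
  -- produce a chain of non-units
  have hchain : ∃ g : ℕ → H, g 0 = a ∧ (∀ i, ¬ PreUnit r (g i)) ∧
      ∀ i, PreLt r (g (i + 1)) (g i) := by
    by_cases hU : ∃ k, PreUnit r (f k)
    · obtain ⟨k, hk⟩ := hU
      have hkuniq : ∀ j, PreUnit r (f j) → j = k := by
        intro j hj
        by_contra hne
        rcases lt_or_gt_of_ne hne with hlt | hlt
        · exact not_preLt_units r ht hk hj (chain_preLt r ht hf hlt)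
        · exact not_preLt_units r ht hj hk (chain_preLt r ht hf hlt)
      have hk0 : k ≠ 0 := fun h0 => hnu (by rwa [h0, hf0] at hk)
      let m : ℕ → ℕ := fun n => if n < k then n else n + 1
      refine ⟨fun n => f (m n), ?_, ?_, ?_⟩
      · show f (m 0) = a
        have : m 0 = 0 := if_pos (Nat.pos_of_ne_zero hk0)
        rw [this, hf0]
      · intro i hui
        have : m i = k := hkuniq (m i) hui
        simp only [m] at this
        split at this <;> omega
      · intro i
        apply chain_preLt r ht hf
        simp only [m]
        split <;> split <;> omega
    · push_neg at hU
      exact ⟨f, hf0, hU, hf⟩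
  obtain ⟨g, hg0, hgu, hg⟩ := hchain
  rw [PreHeight, sSup_eq_top]
  intro b hb
  lift b to ℕ using hb.ne
  refine ⟨((b + 1 : ℕ) : ℕ∞), ⟨b + 1, rfl, by omega, g, hg0, fun i _ => hgu i,
    fun i _ => hg i⟩, ?_⟩
  exact_mod_cast Nat.lt_succ_self b

lemma factor_of_acc (ht : Transitive r) :
    ∀ x : H, Acc (PreLt r) x → PreArtinian r x → ¬ PreUnit r x →
      ∃ l : List H, (∀ a ∈ l, PreIrred r a) ∧ x = l.prod := by
  intro x hacc
  induction hacc with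
  | intro x _ ih =>
    intro hart hnu
    by_cases hirr : PreIrred r x
    · exact ⟨[x], by simpa using hirr, by simp⟩
    · rw [PreIrred] at hirr
      push_neg at hirr
      obtain ⟨y, z, hy, hz, hyx, hzx, hxyz⟩ := hirr hnu
      obtain ⟨l1, hl1, he1⟩ :=
        ih y hyx (preArtinian_of_preLt r ht hart hyx) hy
      obtain ⟨l2, hl2, he2⟩ :=
        ih z hzx (preArtinian_of_preLt r ht hart hzx) hz
      refine ⟨l1 ++ l2, ?_, ?_⟩
      · intro a ha
        rcases List.mem_append.mp ha with h | h
        exacts [hl1 a h, hl2 a h]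
      · rw [List.prod_append, ← he1, ← he2, hxyz]

end Aux

theorem stmt6 (r : H → H → Prop) (hrefl : Reflexive r) (htrans : Transitive r)
    (hfin : ∀ a : H, PreIrred r a → PreHeight r a ≠ ⊤) :
    PreFactorable r ↔ LocallyArtinian r := by
  constructor
  · intro hfac x hx
    obtain ⟨l, hl, he⟩ := hfac x hx
    refine ⟨l, fun a ha => ⟨(hl a ha).1, ?_⟩, he⟩
    by_contra hart
    exact hfin a (hl a ha)
      (preHeight_top_of_not_preArtinian r htrans (hl a ha).1 hart)
  · intro hla x hx
    obtain ⟨l, hl, he⟩ := hla x hx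
    clear hx
    induction l generalizing x with
    | nil => exact ⟨[], by simp, by simpa using he⟩
    | cons a t iht =>
      obtain ⟨la, hla', hea⟩ := factor_of_acc r htrans a
        (acc_of_preArtinian r (hl a (by simp)).2) (hl a (by simp)).2 (hl a (by simp)).1
      obtain ⟨lt', hlt', het⟩ := iht t.prod (fun b hb => hl b (by simp [hb])) rfl
      refine ⟨la ++ lt', ?_, ?_⟩
      · intro b hb
        rcases List.mem_append.mp hb with h | h
        exacts [hla' b h, hlt' b h]
      · rw [List.prod_append, ← hea, ← het, he, List.prod_cons]
end

section
/- An acyclic monoid H is atomic if and only if H has a generating set each of whose elements satisfies the ACCP. -/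
variable {H : Type*} [Monoid H]

/-- divisibility preorder: `x ∣_H y` iff `y ∈ HxH`. -/
def DvdH (x y : H) : Prop := ∃ u v : H, y = u * x * v

/-- principal two-sided ideal `HxH`. -/
def IdealH (x : H) : Set H := {w : H | ∃ u v : H, w = u * x * v}

/-- `u` is a `∣_H`-unit. -/
def DvdUnit (u : H) : Prop := DvdH u 1 ∧ DvdH 1 u

/-- strict divisibility. -/
def DvdLt (a b : H) : Prop := DvdH a b ∧ ¬ DvdH b a

/-- `H` is acyclic. -/
def Acyclic (H : Type*) [Monoid H] : Prop :=
  ∀ u v x : H, u * x * v = x → IsUnit u ∧ IsUnit v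

/-- an atom: a non-unit that is not a product of two non-units. -/
def IsAtom' (a : H) : Prop :=
  ¬ IsUnit a ∧ ∀ y z : H, ¬ IsUnit y → ¬ IsUnit z → a ≠ y * z

/-- `x` satisfies the ACCP (on principal two-sided ideals). -/
def SatisfiesACCP (x : H) : Prop :=
  ¬ ∃ f : ℕ → H, f 0 = x ∧ ∀ i, IdealH (f i) ⊂ IdealH (f (i + 1))

lemma mem_idealH_self (x : H) : x ∈ IdealH x := ⟨1, 1, by simp⟩

lemma idealH_subset {x y : H} (h : y ∈ IdealH x) : IdealH y ⊆ IdealH x := by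
  obtain ⟨u, v, rfl⟩ := h
  rintro w ⟨p, q, rfl⟩
  exact ⟨p * u, v * q, by simp [mul_assoc]⟩

lemma acyclic_unit_of_mul_eq_one (hH : Acyclic H) {a b : H} (h : a * b = 1) :
    IsUnit a ∧ IsUnit b := by
  have h1 : 1 * a * (b * a) = a := by
    rw [one_mul, ← mul_assoc, h, one_mul]
  obtain ⟨c, hc⟩ := (hH 1 (b * a) a h1).2
  have hc1 : (b * a) * ↑c⁻¹ = 1 := by rw [← hc]; exact c.mul_inv
  have hb : b * (a * ↑c⁻¹) = 1 := by rw [← mul_assoc]; exact hc1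
  have hac : a * ↑c⁻¹ = a := by
    calc a * ↑c⁻¹ = (a * b) * (a * ↑c⁻¹) := by rw [h, one_mul]
    _ = a * (b * (a * ↑c⁻¹)) := by rw [mul_assoc]
    _ = a := by rw [hb, mul_one]
  rw [hac] at hb
  exact ⟨⟨⟨a, b, h, hb⟩, rfl⟩, ⟨⟨b, a, hb, h⟩, rfl⟩⟩

lemma acyclic_isUnit_left (hH : Acyclic H) {a b : H} (h : IsUnit (a * b)) : IsUnit a := by
  obtain ⟨c, hc⟩ := h
  have h1 : a * (b * ↑c⁻¹) = 1 := by rw [← mul_assoc, ← hc]; exact c.mul_inv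
  exact (acyclic_unit_of_mul_eq_one hH h1).1

lemma acyclic_isUnit_right (hH : Acyclic H) {a b : H} (h : IsUnit (a * b)) : IsUnit b := by
  obtain ⟨c, hc⟩ := h
  have h1 : (↑c⁻¹ * a) * b = 1 := by rw [mul_assoc, ← hc]; exact c.inv_mul
  exact (acyclic_unit_of_mul_eq_one hH h1).2

lemma unit_idealH {u : H} (hu : IsUnit u) : IdealH u = Set.univ := by
  obtain ⟨c, rfl⟩ := hu
  ext w
  simp only [Set.mem_univ, iff_true]
  exact ⟨w * ↑c⁻¹, 1, by simp⟩

lemma unit_accp {u : H} (hu : IsUnit u) : SatisfiesACCP u := by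
  rintro ⟨f, hf0, hf⟩
  have h := hf 0
  rw [hf0, unit_idealH hu] at h
  exact h.not_subset (Set.subset_univ _)

lemma atom_accp (hH : Acyclic H) {a : H} (ha : IsAtom' a) : SatisfiesACCP a := by
  rintro ⟨f, hf0, hf⟩
  have h01 := hf 0
  rw [hf0] at h01
  obtain ⟨u, v, huv⟩ := h01.1 (mem_idealH_self a)
  have hf1unit : IsUnit (f 1) → False := by
    intro h1
    exact (hf 1).not_subset (by rw [unit_idealH h1]; exact Set.subset_univ _)
  by_cases hu : IsUnit u
  · by_cases hv : IsUnit v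
    · obtain ⟨U, rfl⟩ := hu
      obtain ⟨V, rfl⟩ := hv
      have hmem : f 1 ∈ IdealH a :=
        ⟨↑U⁻¹, ↑V⁻¹, by rw [huv]; simp [mul_assoc]⟩
      exact h01.not_subset (idealH_subset hmem)
    · -- v non-unit, so u * f 1 is a unit, hence f 1 is a unit
      have huv' : a = (u * f 1) * v := huv
      by_cases hw : IsUnit (u * f 1)
      · exact hf1unit (acyclic_isUnit_right hH hw)
      · exact ha.2 (u * f 1) v hw hv huv'
  · -- u non-unit, so f 1 * v is a unit
    have huv' : a = u * (f 1 * v) := by rw [huv, mul_assoc]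
    by_cases hw : IsUnit (f 1 * v)
    · exact hf1unit (acyclic_isUnit_left hH hw)
    · exact ha.2 u (f 1 * v) hu hw huv'

lemma step_lemma (hH : Acyclic H) {x : H} (h1 : ¬IsUnit x)
    (h2 : ¬∃ l : List H, (∀ a ∈ l, IsAtom' a) ∧ x = l.prod) :
    ∃ y : H, (¬IsUnit y ∧ ¬∃ l : List H, (∀ a ∈ l, IsAtom' a) ∧ y = l.prod) ∧
      IdealH x ⊂ IdealH y := by
  have hna : ¬ ∀ y z : H, ¬ IsUnit y → ¬ IsUnit z → x ≠ y * z := by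
    intro h
    refine h2 ⟨[x], ?_, (List.prod_singleton).symm⟩
    intro a ha
    rw [List.mem_singleton] at ha
    subst ha
    exact ⟨h1, h⟩
  push_neg at hna
  obtain ⟨y, z, hy, hz, hxyz⟩ := hna
  by_cases hyl : ∃ l : List H, (∀ a ∈ l, IsAtom' a) ∧ y = l.prod
  · by_cases hzl : ∃ l : List H, (∀ a ∈ l, IsAtom' a) ∧ z = l.prod
    · obtain ⟨ly, hly, hlyp⟩ := hyl
      obtain ⟨lz, hlz, hlzp⟩ := hzl
      exact absurd ⟨ly ++ lz, fun a ha => by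
        rcases List.mem_append.1 ha with h | h
        · exact hly a h
        · exact hlz a h, by rw [List.prod_append, hxyz, hlyp, hlzp]⟩ h2
    · -- use z
      refine ⟨z, ⟨hz, hzl⟩, ?_, ?_⟩
      · exact idealH_subset ⟨y, 1, by rw [hxyz, mul_one]⟩
      · intro hsub
        obtain ⟨u, v, huv⟩ := hsub (mem_idealH_self z)
        have heq : (u * y) * z * v = z := by
          rw [mul_assoc u y z, ← hxyz]
          exact huv.symm
        exact hy (acyclic_isUnit_right hH (hH (u * y) v z heq).1)
  · -- use y
    refine ⟨y, ⟨hy, hyl⟩, ?_, ?_⟩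
    · exact idealH_subset ⟨1, z, by rw [hxyz, one_mul]⟩
    · intro hsub
      obtain ⟨u, v, huv⟩ := hsub (mem_idealH_self y)
      have heq : u * y * (z * v) = y := by
        rw [← mul_assoc, mul_assoc u y z, ← hxyz]
        exact huv.symm
      exact hz (acyclic_isUnit_left hH (hH u (z * v) y heq).2)

lemma accp_atomic (hH : Acyclic H) {x : H} (hacc : SatisfiesACCP x) (hx : ¬IsUnit x) :
    ∃ l : List H, (∀ a ∈ l, IsAtom' a) ∧ x = l.prod := by
  by_contra h2
  let Bad : H → Prop := fun y => ¬IsUnit y ∧ ¬∃ l : List H, (∀ a ∈ l, IsAtom' a) ∧ y = l.prod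
  have hstep : ∀ y, Bad y → ∃ z, Bad z ∧ IdealH y ⊂ IdealH z :=
    fun y hy => step_lemma hH hy.1 hy.2
  let f : ℕ → {y : H // Bad y} := fun n => Nat.rec ⟨x, hx, h2⟩
    (fun _ p => ⟨Classical.choose (hstep p.1 p.2),
      (Classical.choose_spec (hstep p.1 p.2)).1⟩) n
  exact hacc ⟨fun n => (f n).1, rfl,
    fun i => (Classical.choose_spec (hstep (f i).1 (f i).2)).2⟩

lemma unit_mul_atom {u a : H} (hu : IsUnit u) (ha : IsAtom' a) : IsAtom' (u * a) := by
  obtain ⟨U, rfl⟩ := hu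
  constructor
  · intro h
    exact ha.1 (by
      have : a = ↑U⁻¹ * (↑U * a) := by simp
      rw [this]
      exact (U⁻¹).isUnit.mul h)
  · intro y z hy hz hyz
    have : a = (↑U⁻¹ * y) * z := by
      rw [mul_assoc, ← hyz]; simp
    refine ha.2 (↑U⁻¹ * y) z ?_ hz this
    intro h
    exact hy (by
      have : y = ↑U * (↑U⁻¹ * y) := by simp
      rw [this]
      exact U.isUnit.mul h)

lemma atom_mul_unit {u a : H} (ha : IsAtom' a) (hu : IsUnit u) : IsAtom' (a * u) := by
  obtain ⟨U, rfl⟩ := hu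
  constructor
  · intro h
    exact ha.1 (by
      have : a = (a * ↑U) * ↑U⁻¹ := by simp
      rw [this]
      exact h.mul (U⁻¹).isUnit)
  · intro y z hy hz hyz
    have : a = y * (z * ↑U⁻¹) := by
      rw [← mul_assoc, ← hyz]; simp
    refine ha.2 y (z * ↑U⁻¹) hy ?_ this
    intro h
    exact hz (by
      have : z = (z * ↑U⁻¹) * ↑U := by simp
      rw [this]
      exact h.mul U.isUnit)

lemma absorb_right : ∀ m : List H, m ≠ [] → (∀ b ∈ m, IsAtom' b) → ∀ u : H, IsUnit u →
    ∃ m' : List H, m' ≠ [] ∧ (∀ b ∈ m', IsAtom' b) ∧ m.prod * u = m'.prod := by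
  intro m
  induction m with
  | nil => intro h; exact absurd rfl h
  | cons a0 t ih =>
    intro _ hb u hu
    by_cases ht : t = []
    · subst ht
      refine ⟨[a0 * u], by simp, ?_, by simp⟩
      intro c hc
      rw [List.mem_singleton] at hc
      subst hc
      exact atom_mul_unit (hb a0 (by simp)) hu
    · obtain ⟨m2, hm2ne, hm2, hm2p⟩ := ih ht (fun c hc => hb c (by simp [hc])) u hu
      refine ⟨a0 :: m2, by simp, ?_, ?_⟩
      · intro c hc
        rcases List.mem_cons.1 hc with h | h
        · rw [h]; exact hb a0 (by simp)
        · exact hm2 c h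
      · rw [List.prod_cons, List.prod_cons, mul_assoc, hm2p]

lemma prod_unit_or_atoms : ∀ l : List H,
    (∀ a ∈ l, IsUnit a ∨ ∃ m : List H, (∀ b ∈ m, IsAtom' b) ∧ a = m.prod) →
    IsUnit l.prod ∨ ∃ m : List H, m ≠ [] ∧ (∀ b ∈ m, IsAtom' b) ∧ l.prod = m.prod := by
  intro l
  induction l with
  | nil => intro _; exact Or.inl (by simp)
  | cons a t ih =>
    intro hl
    have ha := hl a (by simp)
    have ht := ih (fun b hb => hl b (by simp [hb]))
    rw [List.prod_cons]
    rcases ht with htu | ⟨mt, hmtne, hmt, hmtp⟩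
    · rcases ha with hau | ⟨m, hm, hmp⟩
      · exact Or.inl (hau.mul htu)
      · by_cases hmn : m = []
        · subst hmn
          simp only [List.prod_nil] at hmp
          exact Or.inl (by rw [hmp]; exact isUnit_one.mul htu)
        · right
          obtain ⟨m', h1, h2, h3⟩ := absorb_right m hmn hm t.prod htu
          exact ⟨m', h1, h2, by rw [hmp, h3]⟩
    · rcases ha with hau | ⟨m, hm, hmp⟩
      · right
        obtain ⟨b, mt', rfl⟩ := List.exists_cons_of_ne_nil hmtne
        refine ⟨(a * b) :: mt', by simp, ?_, ?_⟩
        · intro c hc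
          rcases List.mem_cons.1 hc with h | h
          · subst h; exact unit_mul_atom hau (hmt b (by simp))
          · exact hmt c (by simp [h])
        · rw [hmtp, List.prod_cons, List.prod_cons, ← mul_assoc]
      · by_cases hmn : m = []
        · subst hmn
          simp only [List.prod_nil] at hmp
          right
          exact ⟨mt, hmtne, hmt, by rw [hmp, one_mul, hmtp]⟩
        · right
          refine ⟨m ++ mt, by simp [hmn], ?_, ?_⟩
          · intro c hc
            rcases List.mem_append.1 hc with h | h
            · exact hm c h
            · exact hmt c h
          · rw [List.prod_append, hmp, hmtp]

theorem stmt13 (hH : Acyclic H) :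
    (∀ x : H, ¬ IsUnit x → ∃ l : List H, (∀ a ∈ l, IsAtom' a) ∧ x = l.prod) ↔
    (∃ A : Set H, Submonoid.closure A = ⊤ ∧ ∀ x ∈ A, SatisfiesACCP x) := by
  constructor
  · intro hatomic
    refine ⟨{a : H | IsAtom' a} ∪ {u : H | IsUnit u}, ?_, ?_⟩
    · rw [eq_top_iff]
      intro x _
      by_cases hx : IsUnit x
      · exact Submonoid.subset_closure (Or.inr hx)
      · obtain ⟨l, hl, rfl⟩ := hatomic x hx
        exact Submonoid.list_prod_mem _
          (fun a ha => Submonoid.subset_closure (Or.inl (hl a ha)))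
    · rintro x (hx | hx)
      · exact atom_accp hH hx
      · exact unit_accp hx
  · rintro ⟨A, hA, hACC⟩ x hx
    have hxc : x ∈ Submonoid.closure A := by rw [hA]; trivial
    obtain ⟨l, hl, hlp⟩ := Submonoid.exists_list_of_mem_closure hxc
    have hq := prod_unit_or_atoms l (fun a ha => by
      by_cases hu : IsUnit a
      · exact Or.inl hu
      · exact Or.inr (accp_atomic hH (hACC a (hl a ha)) hu))
    rcases hq with h | ⟨m, _, hm, hmp⟩
    · rw [hlp] at h
      exact absurd h hx
    · exact ⟨m, hm, by rw [← hlp, hmp]⟩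
end
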